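/- Let F be a field with char(F) ≠ 2 and G a non-abelian group, N an index-2 subgroup of G, and suppose the involution * on G fixes every element of G \ N and acts on the abelian subgroup N by n* = a⁻¹na for a ∈ G \ N. Then for any α = β + γa ∈ FG with β, γ ∈ FN, the oriented involution satisfies α⊛ = a⁻¹βa − γa, and αα⊛ = α⊛α. -/

import Mathlib

/-- The oriented involution on the group algebra: `(Σ α_g g)⊛ = Σ α_g σ(g) g*`. -/
noncomputable def oinvMap {F G : Type*} [Field F] [Group G] (st : G → G) (σ : G → F) :
    MonoidAlgebra F G → MonoidAlgebra F G :=
  fun α => Finsupp.sum α.coeff fun g c => MonoidAlgebra.single (st g) (σ g * c)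

/-!
Write `β' = a⁻¹βa`. On `FN` the involution `⊛` is conjugation by `a`, and on `FN·a` it is `-1`,
which gives `α⊛ = β' - γa`. Since `N` is abelian and normal, `β`, `β'` and `γ` pairwise commute;
moreover `aβ' = βa`, and `β'a = aβ` because `a² ∈ N` commutes with `β`. Expanding both products,
the cross terms `γaβ' - βγa` and `β'γa - γaβ` vanish, leaving `ββ' - (γa)²` on each side.
-/

namespace MonoidAlgebra

variable {k G : Type*}

theorem commute_of_forall_mem_support [CommSemiring k] [Mul G] {x y : MonoidAlgebra k G}
    (h : ∀ g ∈ x.coeff.support, ∀ g' ∈ y.coeff.support, Commute g g') : Commute x y := by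
  rw [Commute, SemiconjBy, mul_def, mul_def, Finsupp.sum_comm]
  refine Finsupp.sum_congr fun g hg => Finsupp.sum_congr fun g' hg' => ?_
  rw [(h g' hg' g hg).eq, mul_comm]

theorem support_coeff_conj_subset [Semiring k] [Group G] [DecidableEq G] (x : MonoidAlgebra k G)
    (a : G) :
    (of k G a⁻¹ * x * of k G a).coeff.support ⊆ x.coeff.support.image (a⁻¹ * · * a) := by
  grw [of_apply, of_apply, support_coeff_mul_single_subset, support_coeff_single_mul_subset,
    Finset.image_image]
  rfl

theorem of_inv_mul_mul_of [Semiring k] [Group G] (x : MonoidAlgebra k G) (a : G) :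
    of k G a⁻¹ * x * of k G a = x.coeff.sum fun g c => single (a⁻¹ * g * a) c := by
  conv_lhs => rw [← x.sum_coeff_single]
  simp only [Finsupp.mul_sum, Finsupp.sum_mul, of_apply, single_mul_single, one_mul, mul_one]

end MonoidAlgebra

open MonoidAlgebra

theorem map_conj_eq_of_map_mul {G M : Type*} [Group G] [CommMonoidWithZero M] [IsCancelMulZero M]
    {σ : G → M} (hmul : ∀ g h : G, σ (g * h) = σ g * σ h) {a : G} (ha : σ a ≠ 0) (n : G) :
    σ (a⁻¹ * n * a) = σ n := by
  have hσ1 : σ 1 = 1 := mul_right_cancel₀ ha (by rw [← hmul, one_mul, one_mul])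
  rw [hmul, hmul, mul_right_comm, ← hmul, inv_mul_cancel, hσ1, one_mul]

theorem Commute.add_mul_sub_mul {R : Type*} [Ring R] {β β' γ a : R} (hββ' : Commute β β')
    (hβγ : Commute β γ) (hβ'γ : Commute β' γ) (ha : a * β' = β * a) (ha' : β' * a = a * β) :
    Commute (β + γ * a) (β' - γ * a) := by
  have hl : (β + γ * a) * (β' - γ * a) =
      β * β' - γ * a * (γ * a) + (γ * (a * β') - β * γ * a) := by noncomm_ring
  have hr : (β' - γ * a) * (β + γ * a) =
      β' * β - γ * a * (γ * a) + (β' * γ * a - γ * (a * β)) := by noncomm_ring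
  rw [Commute, SemiconjBy, hl, hr, ha, ← ha', hββ'.eq, hβγ.eq, hβ'γ.eq]
  noncomm_ring

section OrientedInvolution

variable {F G : Type*} [Field F] [Group G] (st : G → G) (σ : G → F)

theorem oinvMap_add (x y : MonoidAlgebra F G) :
    oinvMap st σ (x + y) = oinvMap st σ x + oinvMap st σ y :=
  Finsupp.sum_add_index' (fun _ => by simp) fun _ _ _ => by rw [mul_add, single_add]

variable {st σ}

theorem oinvMap_eq_conj {x : MonoidAlgebra F G} (a : G)
    (h : ∀ g ∈ x.coeff.support, st g = a⁻¹ * g * a ∧ σ g = 1) :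
    oinvMap st σ x = of F G a⁻¹ * x * of F G a := by
  rw [of_inv_mul_mul_of]
  refine Finsupp.sum_congr fun g hg => ?_
  rw [(h g hg).1, (h g hg).2, one_mul]

theorem oinvMap_eq_neg {x : MonoidAlgebra F G} (h : ∀ g ∈ x.coeff.support, st g = g ∧ σ g = -1) :
    oinvMap st σ x = -x := by
  conv_rhs => rw [← x.sum_coeff_single]
  rw [oinvMap, Finsupp.sum, Finsupp.sum, ← Finset.sum_neg_distrib]
  refine Finset.sum_congr rfl fun g hg => ?_
  rw [(h g hg).1, (h g hg).2, neg_one_mul, single_neg]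

end OrientedInvolution

theorem stmt_19_general {F G : Type*} [Field F] [Group G]
    (st : G → G)
    (σ : G → F) (hhom : ∀ g h : G, σ (g * h) = σ g * σ h)
    (habN : ∀ m n : G, σ m = 1 → σ n = 1 → m * n = n * m)
    (a : G) (ha : σ a = -1)
    (hstX : ∀ x : G, σ x = -1 → st x = x)
    (hstN : ∀ n b : G, σ n = 1 → σ b = -1 → st n = b⁻¹ * n * b) :
    ∀ β γ : MonoidAlgebra F G,
      (∀ g ∈ β.coeff.support, σ g = 1) → (∀ g ∈ γ.coeff.support, σ g = 1) →
      oinvMap st σ (β + γ * MonoidAlgebra.of F G a) =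
          MonoidAlgebra.of F G a⁻¹ * β * MonoidAlgebra.of F G a -
            γ * MonoidAlgebra.of F G a ∧
        (β + γ * MonoidAlgebra.of F G a) * oinvMap st σ (β + γ * MonoidAlgebra.of F G a) =
          oinvMap st σ (β + γ * MonoidAlgebra.of F G a) * (β + γ * MonoidAlgebra.of F G a) := by
  classical
  intro β γ hβ hγ
  have hcomm {x y : MonoidAlgebra F G} (hx : ∀ g ∈ x.coeff.support, σ g = 1)
      (hy : ∀ g ∈ y.coeff.support, σ g = 1) : Commute x y :=
    commute_of_forall_mem_support fun g hg g' hg' => habN g g' (hx g hg) (hy g' hg')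
  set oa := of F G a
  set β' := of F G a⁻¹ * β * oa
  have hβ' : ∀ g ∈ β'.coeff.support, σ g = 1 := by
    intro g hg
    obtain ⟨n, hn, rfl⟩ := Finset.mem_image.mp (support_coeff_conj_subset β a hg)
    rw [map_conj_eq_of_map_mul hhom (by simp [ha]), hβ n hn]
  have hγa : ∀ g ∈ (γ * oa).coeff.support, st g = g ∧ σ g = -1 := by
    intro g hg
    obtain ⟨n, hn, rfl⟩ := Finset.mem_image.mp (support_coeff_mul_single_subset γ 1 a hg)
    have hσ : σ (n * a) = -1 := by rw [hhom, hγ n hn, ha, one_mul]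
    exact ⟨hstX _ hσ, hσ⟩
  have hstar : oinvMap st σ (β + γ * oa) = β' - γ * oa := by
    rw [oinvMap_add, oinvMap_eq_conj a fun g hg => ⟨hstN g a (hβ g hg) ha, hβ g hg⟩,
      oinvMap_eq_neg hγa, sub_eq_add_neg]
  have haa : Commute (of F G (a * a)) β := by
    refine hcomm (fun g hg => ?_) hβ
    rw [Finset.mem_singleton.mp (Finsupp.support_single_subset hg), hhom, ha, neg_one_mul, neg_neg]
  refine ⟨hstar, hstar ▸ ?_⟩
  refine Commute.add_mul_sub_mul (hcomm hβ hβ') (hcomm hβ hγ) (hcomm hβ' hγ) ?_ ?_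
  · simp only [β', oa, ← mul_assoc, ← map_mul, mul_inv_cancel, map_one, one_mul]
  · calc β' * oa = of F G a⁻¹ * (β * of F G (a * a)) := by simp only [β', oa, map_mul, mul_assoc]
      _ = oa * β := by rw [← haa.eq, ← mul_assoc, ← map_mul, inv_mul_cancel_left]

theorem stmt_19 {F G : Type*} [Field F] [Group G] (h2 : (2 : F) ≠ 0)
    (hna : ∃ g h : G, g * h ≠ h * g)
    (st : G → G) (hanti : ∀ g h : G, st (g * h) = st h * st g)
    (hinvol : ∀ g : G, st (st g) = g)
    (σ : G → F) (hhom : ∀ g h : G, σ (g * h) = σ g * σ h)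
    (hval : ∀ g : G, σ g = 1 ∨ σ g = -1)
    (habN : ∀ m n : G, σ m = 1 → σ n = 1 → m * n = n * m)
    (a : G) (ha : σ a = -1)
    (hstX : ∀ x : G, σ x = -1 → st x = x)
    (hstN : ∀ n b : G, σ n = 1 → σ b = -1 → st n = b⁻¹ * n * b) :
    ∀ β γ : MonoidAlgebra F G,
      (∀ g ∈ β.coeff.support, σ g = 1) → (∀ g ∈ γ.coeff.support, σ g = 1) →
      oinvMap st σ (β + γ * MonoidAlgebra.of F G a) =
          MonoidAlgebra.of F G a⁻¹ * β * MonoidAlgebra.of F G a -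
            γ * MonoidAlgebra.of F G a ∧
        (β + γ * MonoidAlgebra.of F G a) * oinvMap st σ (β + γ * MonoidAlgebra.of F G a) =
          oinvMap st σ (β + γ * MonoidAlgebra.of F G a) * (β + γ * MonoidAlgebra.of F G a) :=
  stmt_19_general st σ hhom habN a ha hstX hstN
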